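/- Fix a real R ≠ 0 and define G : (Fin D → ℝ) → ℝ by G x = 1 − (Σ_μ ε μ * (x μ)²)/(4R²), the metric g μ ν x := (G x)⁻² * η μ ν and its inverse gInv ν ρ x := (G x)² * (ε ν if ν = ρ else 0). Define the Christoffel symbols Γ ν μ λ x := (1/2) * Σ_ρ gInv ν ρ x * ( ∂_μ (fun y => g ρ λ y) x + ∂_λ (fun y => g ρ μ y) x − ∂_ρ (fun y => g μ λ y) x ). Then for every x with G x ≠ 0 and all μ, λ, ν : Fin D: Γ ν μ λ x = (1/(2 R² * G x)) * ( (ε μ * x μ) * (if ν = λ then 1 else 0) + (ε λ * x λ) * (if ν = μ then 1 else 0) − x ν * η μ λ ). -/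

import Mathlib

/-!
The metric `g = G⁻² η` is conformally flat, so every partial derivative of it is `η` times the
partial derivative of `G⁻²`, namely `∂ₙ (G⁻²) = -2 G⁻³ ∂ₙ G = εₙ xₙ / (R² G³)`. The inverse metric
`G² ε_ν δ_νρ` is diagonal, so the sum over `ρ` in the Christoffel symbol collapses to `ρ = ν`, and
the identities `ε_ν η_νλ = δ_νλ` and `ε_ν² = 1` turn the remaining three terms into the formula.
-/

noncomputable section

/-- The flat `so(p,q)` metric sign factor. -/
def eps (p : ℕ) {D : ℕ} (m : Fin D) : ℝ := if (m : ℕ) < p then -1 else 1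

/-- The flat `so(p,q)` metric. -/
def eta (p : ℕ) {D : ℕ} (m n : Fin D) : ℝ := if m = n then eps p m else 0

lemma eps_mul_self (p : ℕ) {D : ℕ} (m : Fin D) : eps p m * eps p m = 1 := by
  unfold eps
  split_ifs <;> norm_num

lemma eps_mul_eta (p : ℕ) {D : ℕ} (m n : Fin D) :
    eps p m * eta p m n = if m = n then 1 else 0 := by
  unfold eta
  split_ifs <;> simp [eps_mul_self]

lemma hasFDerivAt_sum_mul_sq {ι : Type*} [Fintype ι] (w x : ι → ℝ) :
    HasFDerivAt (fun y : ι → ℝ => ∑ i, w i * y i ^ 2)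
      (∑ i, (2 * w i * x i) • ContinuousLinearMap.proj (R := ℝ) (φ := fun _ : ι => ℝ) i) x := by
  refine HasFDerivAt.fun_sum fun i _ => ?_
  refine (((hasFDerivAt_apply i x).pow 2).const_mul (w i)).congr_fderiv ?_
  ext v
  simp only [Nat.add_one_sub_one, pow_one, nsmul_eq_mul, Nat.cast_ofNat, smul_apply,
    ContinuousLinearMap.proj_apply, smul_eq_mul]
  ring

lemma hasFDerivAt_one_sub_sum_mul_sq_div {ι : Type*} [Fintype ι] (w x : ι → ℝ) (c : ℝ) :
    HasFDerivAt (fun y : ι → ℝ => 1 - (∑ i, w i * y i ^ 2) / c)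
      (∑ i, (-(2 * w i * x i) / c) • ContinuousLinearMap.proj (R := ℝ) (φ := fun _ : ι => ℝ) i) x := by
  simp_rw [div_eq_mul_inv]
  refine (((hasFDerivAt_sum_mul_sq w x).mul_const c⁻¹).const_sub 1).congr_fderiv ?_
  ext v
  simp only [neg_apply, smul_apply, sum_apply, ContinuousLinearMap.proj_apply, smul_eq_mul,
    Finset.mul_sum, neg_mul, Finset.sum_neg_distrib, neg_inj]
  exact Finset.sum_congr rfl fun i _ => by ring

lemma hasFDerivAt_inv_sq {E : Type*} [NormedAddCommGroup E] [NormedSpace ℝ E]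
    {f : E → ℝ} {f' : E →L[ℝ] ℝ} {x : E} (hf : HasFDerivAt f f' x) (hx : f x ≠ 0) :
    HasFDerivAt (fun y => (f y ^ 2)⁻¹) ((-2 / f x ^ 3) • f') x := by
  refine ((hasDerivAt_inv (pow_ne_zero 2 hx)).comp_hasFDerivAt x (hf.pow 2)).congr_fderiv ?_
  ext v
  simp only [Nat.add_one_sub_one, pow_one, nsmul_eq_mul, Nat.cast_ofNat, neg_smul, neg_apply,
    smul_apply, smul_eq_mul]
  field_simp

theorem stmt_10 (p q : ℕ) (R : ℝ) (hR : R ≠ 0) :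
    let D := p + q
    let G : (Fin D → ℝ) → ℝ := fun x => 1 - (∑ μ : Fin D, eps p μ * (x μ) ^ 2) / (4 * R ^ 2)
    let pd : Fin D → ((Fin D → ℝ) → ℝ) → ((Fin D → ℝ) → ℝ) :=
      fun n f x => fderiv ℝ f x (Pi.single n 1)
    let g : Fin D → Fin D → (Fin D → ℝ) → ℝ :=
      fun μ ν x => ((G x) ^ 2)⁻¹ * eta p μ ν
    let gInv : Fin D → Fin D → (Fin D → ℝ) → ℝ :=
      fun ν ρ x => (G x) ^ 2 * (if ν = ρ then eps p ν else 0)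
    let Γ : Fin D → Fin D → Fin D → (Fin D → ℝ) → ℝ :=
      fun ν μ lam x => (1 / 2) * ∑ ρ : Fin D, gInv ν ρ x *
        (pd μ (fun y => g ρ lam y) x + pd lam (fun y => g ρ μ y) x
          - pd ρ (fun y => g μ lam y) x)
    ∀ x : Fin D → ℝ, G x ≠ 0 → ∀ μ lam ν : Fin D,
      Γ ν μ lam x = (1 / (2 * R ^ 2 * G x)) *
        ((eps p μ * x μ) * (if ν = lam then (1 : ℝ) else 0) +
          (eps p lam * x lam) * (if ν = μ then (1 : ℝ) else 0) - x ν * eta p μ lam) := by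
  intro D G pd g gInv Γ x hGx μ lam ν
  have hG : HasFDerivAt G _ x := hasFDerivAt_one_sub_sum_mul_sq_div (eps p) x (4 * R ^ 2)
  -- from here on `G` is an opaque function, so that `ring` treats `G x` as an atom
  clear_value G
  have hpd : ∀ n a b, pd n (fun y => g a b y) x = eps p n * x n / (R ^ 2 * G x ^ 3) * eta p a b := by
    intro n a b
    show fderiv ℝ (fun y => (G y ^ 2)⁻¹ * eta p a b) x (Pi.single n 1) = _
    rw [((hasFDerivAt_inv_sq hG hGx).mul_const (eta p a b)).fderiv]
    simp only [smul_apply, sum_apply, ContinuousLinearMap.proj_apply, Pi.single_apply, smul_eq_mul,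
      mul_ite, mul_one, mul_zero, Finset.sum_ite_eq', Finset.mem_univ, ↓reduceIte]
    ring
  show 1 / 2 * ∑ ρ, G x ^ 2 * (if ν = ρ then eps p ν else 0) * _ = _
  rw [Finset.sum_eq_single_of_mem ν (Finset.mem_univ ν) fun ρ _ hρ => by simp [Ne.symm hρ]]
  simp only [hpd, ite_true]
  rw [← eps_mul_eta p ν lam, ← eps_mul_eta p ν μ]
  field_simp
  linear_combination -(x ν * eta p μ lam) * eps_mul_self p ν
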